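/- arXiv:2303.00614 — 3 statements merged into one kernel-verified Lean document; each statement's English description precedes it below -/
import Mathlib

section
/- For every truck position i of an extended type-aware chromosome with n customers, the sets T(i) and T⁺(i) are disjoint, and both are sets of truck positions strictly greater than i, so |T(i)| + |T⁺(i)| is at most the number of truck positions strictly greater than i. Consequently, the sum over all truck positions i of (|T(i)| + |T⁺(i)|) is at most (n+2)(n+1); hence for a given chromosome where the sequence and types of the vehicles are known, the Join dynamic program examines O(n²) candidate transitions (Lemma 1). -/
open scoped ENNReal NNReal

/-- Positions of the extended chromosome `E` carrying truck nodes (positive entries). -/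
def truckPos (E : List ℤ) : Finset ℕ :=
  (Finset.range E.length).filter fun i => 0 < E.getD i 0

/-- Positions of the extended chromosome `E` carrying drone nodes (negative entries). -/
def dronePos (E : List ℤ) : Finset ℕ :=
  (Finset.range E.length).filter fun i => E.getD i 0 < 0

/-- `d(i)`: the smallest drone position greater than `i`, if one exists. -/
def droneNext (E : List ℤ) (i : ℕ) : Option ℕ :=
  if h : ((dronePos E).filter fun j => i < j).Nonempty
  then some (((dronePos E).filter fun j => i < j).min' h)
  else none

/-- `T(i)`: the truck positions strictly between `i` and `d(i)`
(all truck positions greater than `i` when `d(i)` does not exist). -/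
def Tset (E : List ℤ) (i : ℕ) : Finset ℕ :=
  match droneNext E i with
  | some di => (truckPos E).filter fun j => i < j ∧ j < di
  | none => (truckPos E).filter fun j => i < j

/-- `T⁺(i)`: the truck positions strictly between `d(i)` and `d⁺(i)`
(all truck positions greater than `d(i)` when `d⁺(i)` does not exist),
and `∅` when `d(i)` does not exist. -/
def Tplus (E : List ℤ) (i : ℕ) : Finset ℕ :=
  match droneNext E i with
  | some di =>
      match droneNext E di with
      | some di' => (truckPos E).filter fun j => di < j ∧ j < di'
      | none => (truckPos E).filter fun j => di < j
  | none => ∅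

/-- An extended type-aware chromosome for `n` customers: positions `0,…,n+1`, where
positions `0` and `n+1` carry truck depots (positive entries) and the entries in
between have absolute values exactly `1,…,n`, each appearing once. -/
def IsExtChromosome (n : ℕ) (E : List ℤ) : Prop :=
  E.length = n + 2 ∧ 0 < E.getD 0 0 ∧ 0 < E.getD (n + 1) 0 ∧
    List.Perm (((E.drop 1).take n).map Int.natAbs) (List.range' 1 n)

lemma droneNext_some {E : List ℤ} {i di : ℕ} (h : droneNext E i = some di) :
    di ∈ dronePos E ∧ i < di := by
  unfold droneNext at h
  split at h
  · rename_i hne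
    simp only [Option.some.injEq] at h
    subst h
    have := Finset.min'_mem _ hne
    simpa using this
  · simp at h

/-- Lemma 1: for each truck position `i` of an extended type-aware chromosome with `n`
customers, `T(i)` and `T⁺(i)` are disjoint sets of truck positions strictly greater
than `i`, so `|T(i)| + |T⁺(i)|` is at most the number of truck positions greater than
`i`; summing over all truck positions `i`, the Join dynamic program examines at most
`(n+2)(n+1)` candidate transitions, i.e. `O(n²)` of them. -/
theorem join_quadratic_transitions (n : ℕ) (E : List ℤ)
    (hE : IsExtChromosome n E) :
    (∀ i ∈ truckPos E,
      Disjoint (Tset E i) (Tplus E i) ∧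
      Tset E i ⊆ (truckPos E).filter (fun j => i < j) ∧
      Tplus E i ⊆ (truckPos E).filter (fun j => i < j) ∧
      (Tset E i).card + (Tplus E i).card ≤
        ((truckPos E).filter (fun j => i < j)).card) ∧
    ∑ i ∈ truckPos E, ((Tset E i).card + (Tplus E i).card) ≤ (n + 2) * (n + 1) := by

  obtain ⟨hlen, -, -, -⟩ := hE
  have hsubR : truckPos E ⊆ Finset.range (n + 2) := by
    intro j hj
    simp only [truckPos, Finset.mem_filter, Finset.mem_range, hlen] at hj ⊢
    exact hj.1
  have key : ∀ i ∈ truckPos E,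
      Disjoint (Tset E i) (Tplus E i) ∧
      Tset E i ⊆ (truckPos E).filter (fun j => i < j) ∧
      Tplus E i ⊆ (truckPos E).filter (fun j => i < j) ∧
      (Tset E i).card + (Tplus E i).card ≤
        ((truckPos E).filter (fun j => i < j)).card := by
    intro i hi
    have main : Disjoint (Tset E i) (Tplus E i) ∧
        Tset E i ⊆ (truckPos E).filter (fun j => i < j) ∧
        Tplus E i ⊆ (truckPos E).filter (fun j => i < j) := by
      cases hd : droneNext E i with
      | none =>
        refine ⟨?_, ?_, ?_⟩
        · simp [Tplus, hd]
        · intro j hj; simp only [Tset, hd, Finset.mem_filter] at hj ⊢; exact hj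
        · simp [Tplus, hd]
      | some di =>
        obtain ⟨-, hidi⟩ := droneNext_some hd
        cases hd2 : droneNext E di with
        | none =>
          refine ⟨Finset.disjoint_left.2 ?_, ?_, ?_⟩
          · intro j hj1 hj2
            simp only [Tset, Tplus, hd, hd2, Finset.mem_filter] at hj1 hj2
            omega
          · intro j hj; simp only [Tset, hd, Finset.mem_filter] at hj ⊢
            exact ⟨hj.1, hj.2.1⟩
          · intro j hj; simp only [Tplus, hd, hd2, Finset.mem_filter] at hj ⊢
            exact ⟨hj.1, by omega⟩
        | some di' =>
          refine ⟨Finset.disjoint_left.2 ?_, ?_, ?_⟩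
          · intro j hj1 hj2
            simp only [Tset, Tplus, hd, hd2, Finset.mem_filter] at hj1 hj2
            omega
          · intro j hj; simp only [Tset, hd, Finset.mem_filter] at hj ⊢
            exact ⟨hj.1, hj.2.1⟩
          · intro j hj; simp only [Tplus, hd, hd2, Finset.mem_filter] at hj ⊢
            exact ⟨hj.1, by omega⟩
    obtain ⟨hdisj, h1, h2⟩ := main
    refine ⟨hdisj, h1, h2, ?_⟩
    rw [← Finset.card_union_of_disjoint hdisj]
    exact Finset.card_le_card (Finset.union_subset h1 h2)
  refine ⟨key, ?_⟩
  have hbound : ∀ i ∈ truckPos E,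
      (Tset E i).card + (Tplus E i).card ≤ n + 1 := by
    intro i hi
    have h1 := (key i hi).2.2.2
    have h2 : ((truckPos E).filter (fun j => i < j)).card ≤ n + 1 := by
      have hsub : (truckPos E).filter (fun j => i < j) ⊆
          (Finset.range (n + 2)).erase i := by
        intro j hj
        simp only [Finset.mem_filter] at hj
        exact Finset.mem_erase.2 ⟨by omega, hsubR hj.1⟩
      calc _ ≤ ((Finset.range (n + 2)).erase i).card := Finset.card_le_card hsub
        _ = n + 1 := by
            rw [Finset.card_erase_of_mem (hsubR hi)]; simp
    omega
  calc ∑ i ∈ truckPos E, ((Tset E i).card + (Tplus E i).card)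
      ≤ ∑ _i ∈ truckPos E, (n + 1) := Finset.sum_le_sum hbound
    _ = (truckPos E).card * (n + 1) := by rw [Finset.sum_const, smul_eq_mul]
    _ ≤ (n + 2) * (n + 1) := by
        have := Finset.card_le_card hsubR
        simp only [Finset.card_range] at this
        exact Nat.mul_le_mul_right _ this
end

section
/- Suppose an extended type-aware chromosome has no two adjacent drone positions (i.e., it is feasible with respect to the single-visit-per-flight requirement) and its final position m carries a truck node. Then for every truck position i < m, the sets T(i) and T⁺(i) are not both empty. More precisely, if T(i) = ∅ then position i+1 is a drone position equal to d(i), position i+2 exists and is a truck position, and i+2 ∈ T⁺(i). Consequently the Bellman value C(i) of the Join dynamic program is finite for every state i. -/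
open scoped ENNReal NNReal

/-!
If `T(i) = ∅`, the position right after `i` cannot be a truck position, so it is the drone
position `d(i)`; it is not the final depot, and by feasibility the position after it is a truck
position, which then lies in `T⁺(i)`. Hence every truck state `i < m` has a successor state
`k > i` in `T(i) ∪ T⁺(i)`, and finiteness of `C` propagates downward from `C m = 0`.
-/

lemma forall_of_exists_gt_imp {P Q : ℕ → Prop} {N : ℕ} (hP : ∀ i, P i → i ≤ N) (hN : Q N)
    (hstep : ∀ i, P i → i < N → ∃ k, P k ∧ i < k ∧ (Q k → Q i)) : ∀ i, P i → Q i := by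
  intro i hi
  induction hd : N - i using Nat.strong_induction_on generalizing i with
  | _ d ih =>
    rcases (hP i hi).lt_or_eq with hlt | rfl
    · obtain ⟨k, hk, hik, hQ⟩ := hstep i hi hlt
      exact hQ (ih (N - k) (by omega) k hk rfl)
    · exact hN

section Positions

variable {E : List ℤ} {i j d : ℕ}

lemma mem_truckPos : i ∈ truckPos E ↔ i < E.length ∧ 0 < E.getD i 0 := by
  simp [truckPos]

lemma mem_dronePos : i ∈ dronePos E ↔ i < E.length ∧ E.getD i 0 < 0 := by
  simp [dronePos]

lemma notMem_dronePos_of_mem_truckPos (h : i ∈ truckPos E) : i ∉ dronePos E := by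
  rw [mem_truckPos] at h
  rw [mem_dronePos]
  omega

lemma mem_truckPos_or_mem_dronePos (hi : i < E.length) (h0 : E.getD i 0 ≠ 0) :
    i ∈ truckPos E ∨ i ∈ dronePos E := by
  rw [mem_truckPos, mem_dronePos]
  omega

lemma droneNext_eq_some_iff :
    droneNext E i = some d ↔ d ∈ dronePos E ∧ i < d ∧ ∀ j ∈ dronePos E, i < j → d ≤ j := by
  unfold droneNext
  split_ifs with hne
  · simp only [Option.some.injEq, Finset.min'_eq_iff, Finset.mem_filter, and_imp, and_assoc]
  · simp only [false_iff]
    rintro ⟨hd, hid, -⟩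
    exact hne ⟨d, Finset.mem_filter.mpr ⟨hd, hid⟩⟩

lemma droneNext_eq_none_iff : droneNext E i = none ↔ ∀ j ∈ dronePos E, j ≤ i := by
  unfold droneNext
  split_ifs with hne
  · obtain ⟨j, hj⟩ := hne
    rw [Finset.mem_filter] at hj
    simp only [false_iff, not_forall, not_le]
    exact ⟨j, hj.1, hj.2⟩
  · simp only [Finset.not_nonempty_iff_eq_empty, Finset.filter_eq_empty_iff, not_lt] at hne
    simpa using hne

lemma droneNext_eq_succ (h : i + 1 ∈ dronePos E) : droneNext E i = some (i + 1) :=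
  droneNext_eq_some_iff.mpr ⟨h, i.lt_succ_self, fun _ _ hj => hj⟩

lemma mem_Tset_iff :
    j ∈ Tset E i ↔ j ∈ truckPos E ∧ i < j ∧ ∀ d ∈ dronePos E, i < d → j < d := by
  unfold Tset
  rcases h : droneNext E i with _ | di
  · rw [droneNext_eq_none_iff] at h
    simp only [Finset.mem_filter]
    exact ⟨fun ⟨ht, hij⟩ => ⟨ht, hij, fun d hd hid => absurd (h d hd) (by omega)⟩,
      fun ⟨ht, hij, _⟩ => ⟨ht, hij⟩⟩
  · obtain ⟨hdi, hidi, hmin⟩ := droneNext_eq_some_iff.mp h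
    simp only [Finset.mem_filter]
    exact ⟨fun ⟨ht, hij, hjd⟩ => ⟨ht, hij, fun d hd hid => hjd.trans_le (hmin d hd hid)⟩,
      fun ⟨ht, hij, hj⟩ => ⟨ht, hij, hj di hdi hidi⟩⟩

lemma Tplus_eq_Tset_of_droneNext_eq_some (h : droneNext E i = some d) :
    Tplus E i = Tset E d := by
  simp only [Tplus, Tset, h]

lemma Tplus_eq_empty_of_droneNext_eq_none (h : droneNext E i = none) : Tplus E i = ∅ := by
  simp only [Tplus, h]

lemma Tset_subset : Tset E i ⊆ (truckPos E).filter (i < ·) := fun j hj => by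
  obtain ⟨ht, hij, -⟩ := mem_Tset_iff.mp hj
  exact Finset.mem_filter.mpr ⟨ht, hij⟩

lemma Tplus_subset : Tplus E i ⊆ (truckPos E).filter (i < ·) := by
  rcases h : droneNext E i with _ | di
  · simp [Tplus_eq_empty_of_droneNext_eq_none h]
  · rw [Tplus_eq_Tset_of_droneNext_eq_some h]
    have hidi := (droneNext_eq_some_iff.mp h).2.1
    exact Tset_subset.trans (Finset.monotone_filter_right _ fun _ _ hj => hidi.trans hj)

lemma succ_mem_Tset (h : i + 1 ∈ truckPos E) : i + 1 ∈ Tset E i :=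
  mem_Tset_iff.mpr ⟨h, i.lt_succ_self, fun _ hd hid => (Nat.succ_le_of_lt hid).lt_of_ne <| by
    rintro rfl
    exact notMem_dronePos_of_mem_truckPos h hd⟩

lemma add_two_mem_Tplus (h₁ : i + 1 ∈ dronePos E) (h₂ : i + 2 ∈ truckPos E) :
    i + 2 ∈ Tplus E i := by
  rw [Tplus_eq_Tset_of_droneNext_eq_some (droneNext_eq_succ h₁)]
  exact succ_mem_Tset h₂

end Positions

namespace IsExtChromosome

variable {n : ℕ} {E : List ℤ} {i : ℕ}

lemma getD_ne_zero (hE : IsExtChromosome n E) (hi : i < n + 2) : E.getD i 0 ≠ 0 := by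
  obtain ⟨hlen, h0, hlast, hperm⟩ := hE
  rcases Nat.eq_zero_or_pos i with rfl | hpos
  · exact h0.ne'
  rcases (Nat.lt_succ_iff.mp hi).lt_or_eq with hin | rfl
  · have hidx : i - 1 < ((E.drop 1).take n).length := by simp [hlen]; omega
    have hentry : ((E.drop 1).take n)[i - 1] = E.getD i 0 := by
      rw [List.getD_eq_getElem _ _ (by omega)]
      simp only [List.getElem_take, List.getElem_drop]
      congr 1
      omega
    have hmem := hperm.mem_iff.mp (List.mem_map_of_mem (List.getElem_mem hidx))
    rw [hentry, List.mem_range'_1] at hmem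
    omega
  · exact hlast.ne'

lemma mem_truckPos_or_mem_dronePos (hE : IsExtChromosome n E) (hi : i < n + 2) :
    i ∈ truckPos E ∨ i ∈ dronePos E :=
  _root_.mem_truckPos_or_mem_dronePos (hE.1 ▸ hi) (hE.getD_ne_zero hi)

lemma last_mem_truckPos (hE : IsExtChromosome n E) : n + 1 ∈ truckPos E :=
  mem_truckPos.mpr ⟨by rw [hE.1]; omega, hE.2.2.1⟩

lemma le_of_mem_truckPos (hE : IsExtChromosome n E) (hi : i ∈ truckPos E) : i ≤ n + 1 := by
  have := (mem_truckPos.mp hi).1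
  rw [hE.1] at this
  omega

lemma succ_mem_Tset_or_add_two_mem_Tplus (hE : IsExtChromosome n E)
    (hfeas : ∀ i, ¬(i ∈ dronePos E ∧ i + 1 ∈ dronePos E)) (hi : i < n + 1) :
    i + 1 ∈ Tset E i ∨
      (i + 1 ∈ dronePos E ∧ i + 2 ≤ n + 1 ∧ i + 2 ∈ truckPos E ∧ i + 2 ∈ Tplus E i) := by
  rcases hE.mem_truckPos_or_mem_dronePos (i := i + 1) (by omega) with ht | hd
  · exact .inl (succ_mem_Tset ht)
  have hne : i + 1 ≠ n + 1 := fun h =>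
    notMem_dronePos_of_mem_truckPos hE.last_mem_truckPos (h ▸ hd)
  have ht : i + 2 ∈ truckPos E :=
    (hE.mem_truckPos_or_mem_dronePos (by omega)).resolve_right fun h => hfeas (i + 1) ⟨hd, h⟩
  exact .inr ⟨hd, by omega, ht, add_two_mem_Tplus hd ht⟩

end IsExtChromosome

/-- For a feasible extended type-aware chromosome (no two adjacent drone positions)
whose final position `m = n+1` carries a truck node, for every truck position `i < m`
the sets `T(i)` and `T⁺(i)` are not both empty; more precisely, if `T(i) = ∅` then
position `i+1` is a drone position equal to `d(i)`, position `i+2` exists and is a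
truck position, and `i+2 ∈ T⁺(i)`.  Consequently, any Bellman value `C` of the Join
dynamic program is finite at every state. -/
theorem feasible_chromosome_no_dead_end (n : ℕ) (E : List ℤ)
    (hE : IsExtChromosome n E)
    (hfeas : ∀ i, ¬(i ∈ dronePos E ∧ i + 1 ∈ dronePos E)) :
    (∀ i ∈ truckPos E, i < n + 1 →
      ¬(Tset E i = ∅ ∧ Tplus E i = ∅) ∧
      (Tset E i = ∅ →
        i + 1 ∈ dronePos E ∧ droneNext E i = some (i + 1) ∧
        i + 2 ≤ n + 1 ∧ i + 2 ∈ truckPos E ∧ i + 2 ∈ Tplus E i)) ∧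
    (∀ (c : ℕ → ℕ → ℝ≥0) (C : ℕ → ℝ≥0∞),
      C (n + 1) = 0 →
      (∀ i ∈ truckPos E, i < n + 1 →
        C i = ⨅ k ∈ Tset E i ∪ Tplus E i, (((c i k : ℝ≥0) : ℝ≥0∞) + C k)) →
      ∀ i ∈ truckPos E, C i < ⊤) := by
  have hsucc := fun i => hE.succ_mem_Tset_or_add_two_mem_Tplus hfeas (i := i)
  refine ⟨fun i _ hi => ?_, fun c C hlast hrec => ?_⟩
  · rcases hsucc i hi with hT | ⟨hd, hle, ht, hTp⟩
    · exact ⟨fun h => by simp [h.1] at hT, fun h => by simp [h] at hT⟩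
    · exact ⟨fun h => by simp [h.2] at hTp, fun _ => ⟨hd, droneNext_eq_succ hd, hle, ht, hTp⟩⟩
  refine forall_of_exists_gt_imp (fun _ => hE.le_of_mem_truckPos) (by simp [hlast]) ?_
  intro i hi hlt
  obtain ⟨k, hk⟩ : ∃ k, k ∈ Tset E i ∪ Tplus E i := by
    rcases hsucc i hlt with hT | ⟨-, -, -, hTp⟩
    exacts [⟨_, Finset.mem_union_left _ hT⟩, ⟨_, Finset.mem_union_right _ hTp⟩]
  obtain ⟨hkt, hik⟩ := Finset.mem_filter.mp (Finset.union_subset Tset_subset Tplus_subset hk)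
  refine ⟨k, hkt, hik, fun hCk => ?_⟩
  rw [hrec i hi hlt]
  exact (iInf₂_le k hk).trans_lt (ENNReal.add_lt_top.mpr ⟨ENNReal.coe_lt_top, hCk⟩)
end

section
/- The type-aware order crossover TOX1 produces a valid chromosome: let P₁ and P₂ be lists of nonzero integers of length n such that the lists of their entrywise absolute values are each a permutation of (1,…,n), let 0 ≤ i₁ ≤ i₂ ≤ n, let Seg be the sublist of P₁ consisting of its entries at positions i₁ through i₂−1, and let Rest be the sublist of P₂ consisting of those entries whose absolute value does not occur among the absolute values of entries of Seg, taken in the order they appear in P₂. Then the concatenation Seg ++ Rest has length n, all its entries are nonzero, and the list of its entrywise absolute values is a permutation of (1,…,n); i.e., the offspring visits every customer exactly once. -/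
/-!
The absolute values of `Seg` form a sublist of those of `P₁`, hence a subpermutation of
`1,…,n`; filtering `P₂` by absolute value commutes with taking absolute values, so the
absolute values of `Rest` are, up to permutation, the complement `(1,…,n).diff Seg`.
A sub-multiset followed by its complement is a permutation of the whole list; the length
and the nonzero entries are read off from this permutation.
-/

namespace List

variable {α β : Type*} [DecidableEq β]

theorem append_filter_notMem_perm {S M L : List β} (hL : L.Nodup) (hS : S <+~ L)
    (hM : M ~ L) : S ++ M.filter (· ∉ S) ~ L := by
  have hcompl : M.filter (· ∉ S) ~ L.diff S := hL.sdiff_eq_filter ▸ hM.filter _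
  exact (hcompl.append_left S).trans
    (subperm_append_diff_self_of_count_le (subperm_ext_iff.mp hS))

theorem map_append_filter_notMem_perm (f : α → β) {seg l₁ l₂ : List α} {L : List β}
    (hL : L.Nodup) (h₁ : l₁.map f ~ L) (h₂ : l₂.map f ~ L) (hseg : seg <+ l₁) :
    (seg ++ l₂.filter fun x => f x ∉ seg.map f).map f ~ L := by
  have hcomm : (l₂.filter fun x => f x ∉ seg.map f).map f =
      (l₂.map f).filter (· ∉ seg.map f) :=
    (filter_map (p := fun b => decide (b ∉ seg.map f))).symm
  rw [map_append, hcomm]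
  exact append_filter_notMem_perm hL ((hseg.map f).subperm.trans h₁.subperm) h₂

end List

theorem Int.ne_zero_of_natAbs_mem_range' {x : ℤ} {n : ℕ} (hx : x.natAbs ∈ List.range' 1 n) :
    x ≠ 0 :=
  Int.natAbs_pos.mp (List.mem_range'_1.mp hx).1

theorem tox1_valid_general (n : ℕ) (P₁ P₂ : List ℤ)
    (h₁ : List.Perm (P₁.map Int.natAbs) (List.range' 1 n))
    (h₂ : List.Perm (P₂.map Int.natAbs) (List.range' 1 n))
    (i₁ i₂ : ℕ)
    (Seg Rest : List ℤ)
    (hSeg : Seg = (P₁.take i₂).drop i₁)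
    (hRest : Rest = P₂.filter fun x => x.natAbs ∉ Seg.map Int.natAbs) :
    (Seg ++ Rest).length = n ∧ (∀ x ∈ Seg ++ Rest, x ≠ 0) ∧
      List.Perm ((Seg ++ Rest).map Int.natAbs) (List.range' 1 n) := by
  have hSeg_sublist : Seg.Sublist P₁ :=
    hSeg ▸ (List.drop_sublist _ _).trans (List.take_sublist _ _)
  have hperm : ((Seg ++ Rest).map Int.natAbs).Perm (List.range' 1 n) := hRest ▸
    List.map_append_filter_notMem_perm _ List.nodup_range' h₁ h₂ hSeg_sublist
  refine ⟨by simpa using hperm.length_eq, fun x hx => ?_, hperm⟩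
  exact Int.ne_zero_of_natAbs_mem_range' (hperm.subset (List.mem_map_of_mem hx))

/-- Validity of the TOX1 crossover: copying the segment of the first parent between
positions `i₁` and `i₂ - 1` and appending the customers missing from it in the order
(and with the signs) in which they appear in the second parent yields a chromosome of
length `n` with nonzero entries whose absolute values are a permutation of `1,…,n`:
the offspring visits every customer exactly once. -/
theorem tox1_valid (n : ℕ) (P₁ P₂ : List ℤ)
    (h₁len : P₁.length = n) (h₂len : P₂.length = n)
    (h₁ne : ∀ x ∈ P₁, x ≠ 0) (h₂ne : ∀ x ∈ P₂, x ≠ 0)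
    (h₁ : List.Perm (P₁.map Int.natAbs) (List.range' 1 n))
    (h₂ : List.Perm (P₂.map Int.natAbs) (List.range' 1 n))
    (i₁ i₂ : ℕ) (hi₁₂ : i₁ ≤ i₂) (hi₂ : i₂ ≤ n)
    (Seg Rest : List ℤ)
    (hSeg : Seg = (P₁.take i₂).drop i₁)
    (hRest : Rest = P₂.filter fun x => x.natAbs ∉ Seg.map Int.natAbs) :
    (Seg ++ Rest).length = n ∧ (∀ x ∈ Seg ++ Rest, x ≠ 0) ∧
      List.Perm ((Seg ++ Rest).map Int.natAbs) (List.range' 1 n) :=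
  tox1_valid_general n P₁ P₂ h₁ h₂ i₁ i₂ Seg Rest hSeg hRest
end
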